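/- Vorticity formulation: if (u₁^ε, u₂^ε) is a C³ solution of the viscous plane-parallel system on Ω with f₁, f₂ differentiable, then the vorticity components ω₁^ε = −∂_z u₂^ε, ω₂^ε = d_z u₁^ε, ω₃^ε = ∂_x u₂^ε satisfy on Ω: (i) ω₁^ε − ε Δ ω₁^ε − ω₂^ε ω₃^ε + u₁^ε ∂_x ω₁^ε = −∂_z f₂; (ii) ω₂^ε − ε d²_z ω₂^ε = d_z f₁; (iii) ω₃^ε − ε Δ ω₃^ε + u₁^ε ∂_x ω₃^ε = ∂_x f₂. -/

import Mathlib

/-! Each vorticity equation is a derivative of the system: (ii) is `d_z` of the equation for `u₁`,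
and (iii) and (i) are `∂_x` and `-∂_z` of the equation for `u₂`. Since `u₁` does not depend on
`x`, `∂_x` commutes with the operator `u ↦ u - εΔu + u₁ ∂_x u`, while `∂_z` also produces
`(d_z u₁)(∂_x u₂)`, which becomes the stretching term `ω₂ ω₃`. Commuting `∂_x`, `∂_z` and `Δ`
is Schwarz's theorem, available because `u₂` is `C³`. -/

/-- Partial derivative in `x` of a function of two variables. -/
noncomputable def pdx (g : ℝ → ℝ → ℝ) (x z : ℝ) : ℝ := deriv (fun x' => g x' z) x

/-- Partial derivative in `z` of a function of two variables. -/
noncomputable def pdz (g : ℝ → ℝ → ℝ) (x z : ℝ) : ℝ := deriv (fun z' => g x z') z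

/-- Laplacian `∂²_x + ∂²_z` of a function of two variables. -/
noncomputable def lap (g : ℝ → ℝ → ℝ) (x z : ℝ) : ℝ :=
  pdx (pdx g) x z + pdz (pdz g) x z

open Function Set

section PartialDerivatives

variable {g h : ℝ → ℝ → ℝ} {x z : ℝ}

lemma hasDerivAt_slice_fst (hg : DifferentiableAt ℝ (uncurry g) (x, z)) :
    HasDerivAt (fun x' => g x' z) (fderiv ℝ (uncurry g) (x, z) (1, 0)) x :=
  hg.hasFDerivAt.comp_hasDerivAt (f := fun x' : ℝ => (x', z)) x
    ((hasDerivAt_id x).prodMk (hasDerivAt_const x z))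

lemma hasDerivAt_slice_snd (hg : DifferentiableAt ℝ (uncurry g) (x, z)) :
    HasDerivAt (fun z' => g x z') (fderiv ℝ (uncurry g) (x, z) (0, 1)) z :=
  hg.hasFDerivAt.comp_hasDerivAt (f := fun z' : ℝ => (x, z')) z
    ((hasDerivAt_const z x).prodMk (hasDerivAt_id z))

lemma pdx_eq_fderiv (hg : DifferentiableAt ℝ (uncurry g) (x, z)) :
    pdx g x z = fderiv ℝ (uncurry g) (x, z) (1, 0) :=
  (hasDerivAt_slice_fst hg).deriv

lemma pdz_eq_fderiv (hg : DifferentiableAt ℝ (uncurry g) (x, z)) :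
    pdz g x z = fderiv ℝ (uncurry g) (x, z) (0, 1) :=
  (hasDerivAt_slice_snd hg).deriv

lemma hasDerivAt_pdx (hg : DifferentiableAt ℝ (uncurry g) (x, z)) :
    HasDerivAt (fun x' => g x' z) (pdx g x z) x :=
  pdx_eq_fderiv hg ▸ hasDerivAt_slice_fst hg

lemma hasDerivAt_pdz (hg : DifferentiableAt ℝ (uncurry g) (x, z)) :
    HasDerivAt (fun z' => g x z') (pdz g x z) z :=
  pdz_eq_fderiv hg ▸ hasDerivAt_slice_snd hg

lemma pdx_add (hg : DifferentiableAt ℝ (uncurry g) (x, z))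
    (hh : DifferentiableAt ℝ (uncurry h) (x, z)) :
    pdx (fun x z => g x z + h x z) x z = pdx g x z + pdx h x z :=
  ((hasDerivAt_pdx hg).add (hasDerivAt_pdx hh)).deriv

lemma pdz_add (hg : DifferentiableAt ℝ (uncurry g) (x, z))
    (hh : DifferentiableAt ℝ (uncurry h) (x, z)) :
    pdz (fun x z => g x z + h x z) x z = pdz g x z + pdz h x z :=
  ((hasDerivAt_pdz hg).add (hasDerivAt_pdz hh)).deriv

lemma pdx_neg : pdx (fun x z => -g x z) = fun x z => -pdx g x z := by
  funext x z; exact deriv.neg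

lemma pdz_neg : pdz (fun x z => -g x z) = fun x z => -pdz g x z := by
  funext x z; exact deriv.neg

variable {m n : WithTop ℕ∞}

lemma contDiff_pdx (hg : ContDiff ℝ m (uncurry g)) (hnm : n + 1 ≤ m) :
    ContDiff ℝ n (uncurry (pdx g)) := by
  have hd : Differentiable ℝ (uncurry g) :=
    (hg.of_le (le_add_self.trans hnm)).differentiable one_ne_zero
  have : uncurry (pdx g) = fun p => fderiv ℝ (uncurry g) p (1, 0) :=
    funext fun p => pdx_eq_fderiv (hd p)
  exact this ▸ (hg.fderiv_right hnm).clm_apply contDiff_const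

lemma contDiff_pdz (hg : ContDiff ℝ m (uncurry g)) (hnm : n + 1 ≤ m) :
    ContDiff ℝ n (uncurry (pdz g)) := by
  have hd : Differentiable ℝ (uncurry g) :=
    (hg.of_le (le_add_self.trans hnm)).differentiable one_ne_zero
  have : uncurry (pdz g) = fun p => fderiv ℝ (uncurry g) p (0, 1) :=
    funext fun p => pdz_eq_fderiv (hd p)
  exact this ▸ (hg.fderiv_right hnm).clm_apply contDiff_const

lemma pdx_pdz_comm (hg : ContDiff ℝ 2 (uncurry g)) : pdx (pdz g) = pdz (pdx g) := by
  funext x z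
  have hd : Differentiable ℝ (uncurry g) := hg.differentiable two_ne_zero
  have hdd : Differentiable ℝ (fderiv ℝ (uncurry g)) :=
    (hg.fderiv_right (m := 1) le_rfl).differentiable one_ne_zero
  have hdz : uncurry (pdz g) = fun p => fderiv ℝ (uncurry g) p (0, 1) :=
    funext fun p => pdz_eq_fderiv (hd p)
  have hdx : uncurry (pdx g) = fun p => fderiv ℝ (uncurry g) p (1, 0) :=
    funext fun p => pdx_eq_fderiv (hd p)
  rw [pdx_eq_fderiv ((contDiff_pdz hg le_rfl).differentiable one_ne_zero _),
    pdz_eq_fderiv ((contDiff_pdx hg le_rfl).differentiable one_ne_zero _), hdz, hdx,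
    fderiv_clm_apply (hdd _) (differentiableAt_const _),
    fderiv_clm_apply (hdd _) (differentiableAt_const _)]
  simpa using (hg.contDiffAt.isSymmSndFDerivAt (by simp)) (1, 0) (0, 1)

lemma lap_neg : lap (fun x z => -g x z) = fun x z => -lap g x z := by
  funext x z; simp only [lap, pdx_neg, pdz_neg, neg_add]

lemma contDiff_lap (hg : ContDiff ℝ m (uncurry g)) (hnm : n + 2 ≤ m) :
    ContDiff ℝ n (uncurry (lap g)) := by
  have hnm' : n + 1 + 1 ≤ m := by rwa [add_assoc, one_add_one_eq_two]
  exact (contDiff_pdx (contDiff_pdx hg hnm') le_rfl).add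
    (contDiff_pdz (contDiff_pdz hg hnm') le_rfl)

lemma pdx_lap (hg : ContDiff ℝ 3 (uncurry g)) : pdx (lap g) = lap (pdx g) := by
  funext x z
  have hxx : ContDiff ℝ 1 (uncurry (pdx (pdx g))) :=
    contDiff_pdx (contDiff_pdx hg (n := 2) (by norm_num)) le_rfl
  have hz : ContDiff ℝ 2 (uncurry (pdz g)) := contDiff_pdz hg (by norm_num)
  calc pdx (lap g) x z = pdx (pdx (pdx g)) x z + pdx (pdz (pdz g)) x z :=
        pdx_add (hxx.differentiable one_ne_zero _)
          ((contDiff_pdz hz le_rfl).differentiable one_ne_zero _)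
    _ = lap (pdx g) x z := by
        rw [pdx_pdz_comm hz, pdx_pdz_comm (hg.of_le (by norm_num))]; rfl

lemma pdz_lap (hg : ContDiff ℝ 3 (uncurry g)) : pdz (lap g) = lap (pdz g) := by
  funext x z
  have hx : ContDiff ℝ 2 (uncurry (pdx g)) := contDiff_pdx hg (by norm_num)
  have hzz : ContDiff ℝ 1 (uncurry (pdz (pdz g))) :=
    contDiff_pdz (contDiff_pdz hg (n := 2) (by norm_num)) le_rfl
  calc pdz (lap g) x z = pdz (pdx (pdx g)) x z + pdz (pdz (pdz g)) x z :=
        pdz_add ((contDiff_pdx hx le_rfl).differentiable one_ne_zero _)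
          (hzz.differentiable one_ne_zero _)
    _ = lap (pdz g) x z := by
        rw [← pdx_pdz_comm hx, ← pdx_pdz_comm (hg.of_le (by norm_num))]; rfl

end PartialDerivatives

noncomputable def viscousTransport (ε : ℝ) (u₁ : ℝ → ℝ) (u : ℝ → ℝ → ℝ) (x z : ℝ) : ℝ :=
  u x z - ε * lap u x z + u₁ z * pdx u x z

section ViscousTransport

variable {u : ℝ → ℝ → ℝ} (ε : ℝ) (u₁ : ℝ → ℝ) (x z : ℝ)

lemma pdx_viscousTransport (hu : ContDiff ℝ 3 (uncurry u)) :
    pdx (viscousTransport ε u₁ u) x z = viscousTransport ε u₁ (pdx u) x z := by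
  have hlap := (contDiff_lap hu (n := 1) (by norm_num)).differentiable one_ne_zero (x, z)
  have hpdx := (contDiff_pdx hu (n := 2) (by norm_num)).differentiable two_ne_zero (x, z)
  have hslice := ((hasDerivAt_pdx (hu.differentiable (by norm_num) (x, z))).sub
    ((hasDerivAt_pdx hlap).const_mul ε)).add ((hasDerivAt_pdx hpdx).const_mul (u₁ z))
  rw [viscousTransport, ← pdx_lap hu]
  exact hslice.deriv

lemma pdz_viscousTransport (hu : ContDiff ℝ 3 (uncurry u)) (hu₁ : DifferentiableAt ℝ u₁ z) :
    pdz (viscousTransport ε u₁ u) x z =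
      viscousTransport ε u₁ (pdz u) x z + deriv u₁ z * pdx u x z := by
  have hlap := (contDiff_lap hu (n := 1) (by norm_num)).differentiable one_ne_zero (x, z)
  have hpdx := (contDiff_pdx hu (n := 2) (by norm_num)).differentiable two_ne_zero (x, z)
  have hslice := ((hasDerivAt_pdz (hu.differentiable (by norm_num) (x, z))).sub
    ((hasDerivAt_pdz hlap).const_mul ε)).add (hu₁.hasDerivAt.mul (hasDerivAt_pdz hpdx))
  refine hslice.deriv.trans ?_
  rw [viscousTransport, pdz_lap hu, ← pdx_pdz_comm (hu.of_le (by norm_num))]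
  ring

end ViscousTransport

theorem statement7_general (L ε : ℝ)
    (f₁ : ℝ → ℝ) (f₂ : ℝ → ℝ → ℝ)
    (u₁ : ℝ → ℝ) (u₂ : ℝ → ℝ → ℝ)
    (hu₁ : ContDiff ℝ 3 u₁)
    (hu₂ : ContDiff ℝ 3 (fun p : ℝ × ℝ => u₂ p.1 p.2))
    (heq₁ : ∀ z ∈ Set.Ioo (0:ℝ) 1, u₁ z - ε * deriv (deriv u₁) z = f₁ z)
    (heq₂ : ∀ x ∈ Set.Ioo (0:ℝ) L, ∀ z ∈ Set.Ioo (0:ℝ) 1,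
      u₂ x z - ε * lap u₂ x z + u₁ z * pdx u₂ x z = f₂ x z) :
    -- (i)
    (∀ x ∈ Set.Ioo (0:ℝ) L, ∀ z ∈ Set.Ioo (0:ℝ) 1,
      -(pdz u₂ x z) - ε * lap (fun x' z' => -(pdz u₂ x' z')) x z
        - deriv u₁ z * pdx u₂ x z
        + u₁ z * pdx (fun x' z' => -(pdz u₂ x' z')) x z
        = -(pdz f₂ x z))
    -- (ii)
    ∧ (∀ z ∈ Set.Ioo (0:ℝ) 1,
      deriv u₁ z - ε * deriv (deriv (deriv u₁)) z = deriv f₁ z)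
    -- (iii)
    ∧ (∀ x ∈ Set.Ioo (0:ℝ) L, ∀ z ∈ Set.Ioo (0:ℝ) 1,
      pdx u₂ x z - ε * lap (pdx u₂) x z + u₁ z * pdx (pdx u₂) x z
        = pdx f₂ x z) := by
  have hu₁' : Differentiable ℝ u₁ := hu₁.differentiable (by norm_num)
  have hu₁'' : Differentiable ℝ (deriv (deriv u₁)) :=
    (hu₁.iterate_deriv' 1 2).differentiable one_ne_zero
  have hdx : ∀ x ∈ Ioo 0 L, ∀ z ∈ Ioo 0 1,
      pdx (viscousTransport ε u₁ u₂) x z = pdx f₂ x z :=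
    fun x hx z hz => (EqOn.eventuallyEq_of_mem (fun x' hx' => heq₂ x' hx' z hz)
      (Ioo_mem_nhds hx.1 hx.2)).deriv_eq
  have hdz : ∀ x ∈ Ioo 0 L, ∀ z ∈ Ioo 0 1,
      pdz (viscousTransport ε u₁ u₂) x z = pdz f₂ x z :=
    fun x hx z hz => (EqOn.eventuallyEq_of_mem (heq₂ x hx) (Ioo_mem_nhds hz.1 hz.2)).deriv_eq
  refine ⟨fun x hx z hz => ?_, fun z hz => ?_, fun x hx z hz => ?_⟩
  · rw [lap_neg, pdx_neg, ← hdz x hx z hz, pdz_viscousTransport ε u₁ x z hu₂ (hu₁' z),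
      viscousTransport]
    ring
  · rw [← (EqOn.eventuallyEq_of_mem heq₁ (Ioo_mem_nhds hz.1 hz.2)).deriv_eq]
    exact ((hu₁' z).hasDerivAt.sub ((hu₁'' z).hasDerivAt.const_mul ε)).deriv.symm
  · exact (pdx_viscousTransport ε u₁ x z hu₂).symm.trans (hdx x hx z hz)

/-- Vorticity formulation: a `C³` solution `(u₁^ε, u₂^ε)` of the viscous
plane-parallel system on `Ω = (0,L)×(0,1)` has vorticity
`ω = (−∂_z u₂, d_z u₁, ∂_x u₂)` satisfying on `Ω`:
(i) `ω₁ − ε Δω₁ − ω₂ ω₃ + u₁ ∂_x ω₁ = −∂_z f₂`;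
(ii) `ω₂ − ε d²_z ω₂ = d_z f₁`;
(iii) `ω₃ − ε Δω₃ + u₁ ∂_x ω₃ = ∂_x f₂`. -/
theorem statement7 (L ε : ℝ) (hL : 0 < L) (hε : 0 < ε)
    (f₁ : ℝ → ℝ) (f₂ : ℝ → ℝ → ℝ)
    (hf₁ : ContDiff ℝ 1 f₁)
    (hf₂ : ContDiff ℝ 1 (fun p : ℝ × ℝ => f₂ p.1 p.2))
    (hf₂per : ∀ x z : ℝ, f₂ (x + L) z = f₂ x z)
    (u₁ : ℝ → ℝ) (u₂ : ℝ → ℝ → ℝ)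
    (hu₁ : ContDiff ℝ 3 u₁)
    (hu₂ : ContDiff ℝ 3 (fun p : ℝ × ℝ => u₂ p.1 p.2))
    (heq₁ : ∀ z ∈ Set.Ioo (0:ℝ) 1, u₁ z - ε * deriv (deriv u₁) z = f₁ z)
    (heq₂ : ∀ x ∈ Set.Ioo (0:ℝ) L, ∀ z ∈ Set.Ioo (0:ℝ) 1,
      u₂ x z - ε * lap u₂ x z + u₁ z * pdx u₂ x z = f₂ x z)
    (hper : ∀ x z : ℝ, u₂ (x + L) z = u₂ x z) :
    -- (i)
    (∀ x ∈ Set.Ioo (0:ℝ) L, ∀ z ∈ Set.Ioo (0:ℝ) 1,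
      -(pdz u₂ x z) - ε * lap (fun x' z' => -(pdz u₂ x' z')) x z
        - deriv u₁ z * pdx u₂ x z
        + u₁ z * pdx (fun x' z' => -(pdz u₂ x' z')) x z
        = -(pdz f₂ x z))
    -- (ii)
    ∧ (∀ z ∈ Set.Ioo (0:ℝ) 1,
      deriv u₁ z - ε * deriv (deriv (deriv u₁)) z = deriv f₁ z)
    -- (iii)
    ∧ (∀ x ∈ Set.Ioo (0:ℝ) L, ∀ z ∈ Set.Ioo (0:ℝ) 1,
      pdx u₂ x z - ε * lap (pdx u₂) x z + u₁ z * pdx (pdx u₂) x z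
        = pdx f₂ x z) :=
  statement7_general L ε f₁ f₂ u₁ u₂ hu₁ hu₂ heq₁ heq₂
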